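/- arXiv:1711.03364 — 4 statements merged into one kernel-verified Lean document; each statement's English description precedes it below -/
import Mathlib

section
/- Let K, t, α, β, δ be natural numbers with 1 ≤ β ≤ α, t + α ≤ K, and δ·(t+β) = t+α. Then C(K,t) · C(K−t−1, α−1) · (α−1)! · δ! · (t+β)! · (K−t) = (t+α) · C(K, t+α) · (t+α)! · C(t+β−1, t) · (δ−1)! · (β−1)!. Equivalently (clearing denominators), the ratio [C(K,t)·C(K−t−1,α−1)·(α−1)!/((δ−1)!·(β−1)!·((t+β)!)^{δ−1})] divided by [C(K,t+α)·((t+α)!/(δ!·((t+β)!)^δ))·C(t+β−1,t)] equals (t+α)/(K−t); this is the combinatorial identity establishing that the degrees of freedom of the multi-antenna coded caching scheme equal (t+α)/(K−t), independently of β (Corollary 1). -/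
open Nat

/-- DoF combinatorial identity (Corollary 1): the degrees of freedom of the multi-antenna
coded caching scheme equal `(t+α)/(K−t)`, independently of `β`. -/
theorem stmt_0 (K t α β δ : ℕ) (hβ : 1 ≤ β) (hβα : β ≤ α) (hαK : t + α ≤ K)
    (hδ : δ * (t + β) = t + α) :
    K.choose t * (K - t - 1).choose (α - 1) * (α - 1)! * δ ! * (t + β)! * (K - t) =
      (t + α) * K.choose (t + α) * (t + α)! * (t + β - 1).choose t * (δ - 1)! * (β - 1)! := by
  obtain ⟨b, rfl⟩ : ∃ b, β = b + 1 := ⟨β - 1, by omega⟩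
  obtain ⟨a, rfl⟩ : ∃ a, α = a + 1 := ⟨α - 1, by omega⟩
  have hδ1 : 1 ≤ δ := by
    rcases Nat.eq_zero_or_pos δ with h | h
    · simp [h] at hδ
    · exact h
  obtain ⟨d, rfl⟩ : ∃ d, δ = d + 1 := ⟨δ - 1, by omega⟩
  obtain ⟨m, rfl⟩ : ∃ m, K = t + (a + 1) + m := ⟨K - (t + a + 1), by omega⟩
  rw [show t + (a + 1) + m - t - 1 = a + m from by omega,
      show a + 1 - 1 = a from rfl,
      show t + (b + 1) - 1 = t + b from by omega,
      show d + 1 - 1 = d from rfl,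
      show b + 1 - 1 = b from rfl,
      show t + (a + 1) + m - t = a + 1 + m from by omega]
  have hpos : 0 < t ! * (a + 1 + m)! * m ! := by positivity
  apply Nat.eq_of_mul_eq_mul_right hpos
  have h1 : (t + (a + 1) + m).choose t * t ! * (a + 1 + m)! = (t + (a + 1) + m)! := by
    have := Nat.choose_mul_factorial_mul_factorial (show t ≤ t + (a + 1) + m by omega)
    rwa [show t + (a + 1) + m - t = a + 1 + m from by omega] at this
  have h2 : (a + m).choose a * a ! * m ! = (a + m)! := by
    have := Nat.choose_mul_factorial_mul_factorial (show a ≤ a + m by omega)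
    simpa using this
  have h3 : (t + (a + 1) + m).choose (t + (a + 1)) * (t + (a + 1))! * m ! =
      (t + (a + 1) + m)! := by
    have := Nat.choose_mul_factorial_mul_factorial
      (show t + (a + 1) ≤ t + (a + 1) + m by omega)
    simpa using this
  have h4 : (t + b).choose t * t ! * b ! = (t + b)! := by
    have := Nat.choose_mul_factorial_mul_factorial (show t ≤ t + b by omega)
    simpa using this
  have key : (a + m)! * (d + 1)! * (t + (b + 1))! * (a + 1 + m) =
      (t + (a + 1)) * (t + b)! * d ! * (a + 1 + m)! := by
    have hfa : (a + 1 + m)! = (a + 1 + m) * (a + m)! := by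
      rw [show a + 1 + m = (a + m) + 1 from by omega, Nat.factorial_succ]
    have hfb : (t + (b + 1))! = (t + (b + 1)) * (t + b)! := by
      rw [show t + (b + 1) = (t + b) + 1 from by omega, Nat.factorial_succ]
    rw [Nat.factorial_succ d, hfb, hfa]
    calc (a + m)! * ((d + 1) * d !) * ((t + (b + 1)) * (t + b)!) * (a + 1 + m)
        = ((d + 1) * (t + (b + 1))) * ((a + m)! * d ! * (t + b)! * (a + 1 + m)) := by ring
      _ = (t + (a + 1)) * ((a + m)! * d ! * (t + b)! * (a + 1 + m)) := by rw [hδ]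
      _ = (t + (a + 1)) * (t + b)! * d ! * ((a + 1 + m) * (a + m)!) := by ring
  calc (t + (a + 1) + m).choose t * (a + m).choose a * a ! * (d + 1)! * (t + (b + 1))! *
        (a + 1 + m) * (t ! * (a + 1 + m)! * m !)
      = ((t + (a + 1) + m).choose t * t ! * (a + 1 + m)!) *
        ((a + m).choose a * a ! * m !) * ((d + 1)! * (t + (b + 1))! * (a + 1 + m)) := by ring
    _ = (t + (a + 1) + m)! * ((a + m)! * (d + 1)! * (t + (b + 1))! * (a + 1 + m)) := by
        rw [h1, h2]; ring
    _ = (t + (a + 1) + m)! * ((t + (a + 1)) * (t + b)! * d ! * (a + 1 + m)!) := by rw [key]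
    _ = (t + (a + 1)) *
        ((t + (a + 1) + m).choose (t + (a + 1)) * (t + (a + 1))! * m !) *
        ((t + b).choose t * t ! * b !) * d ! * (a + 1 + m)! := by rw [h3, h4]; ring
    _ = (t + (a + 1)) * (t + (a + 1) + m).choose (t + (a + 1)) * (t + (a + 1))! *
        (t + b).choose t * d ! * b ! * (t ! * (a + 1 + m)! * m !) := by ring
end

section
/- Let K, t, α, β, δ be natural numbers with 1 ≤ β ≤ α, t + α ≤ K, and δ·(t+β) = t+α, and fix a subset T ⊆ [K] with |T| = t+1. Then the number of pairs (S, 𝒫), where S ⊆ [K] with |S| = t+α and 𝒫 is a partition of S into δ pairwise disjoint blocks each of cardinality t+β such that T is contained in some block of 𝒫, equals Γ = C(K−t−1, α−1) · (α−1)! / ((δ−1)! · (β−1)! · ((t+β)!)^{δ−1}). (This is the key counting lemma in the proof of Theorem 1: every (t+1)-subset of users appears exactly Γ times over all multicast transmissions of the delivery algorithm, so splitting each subfile into Γ mini-files makes the delivery exact.) -/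
/-!
Forgetting `S = ⋃ 𝒫`, one counts families `𝒫` of `δ` pairwise disjoint `(t+β)`-subsets of `[K]`
having a block that contains `T`. As `T ≠ ∅` that block is unique: it is `T` together with `β - 1`
of the other `K - t - 1` points, and the remaining `δ - 1` blocks form a disjoint family in the
`K - t - β` points outside it. Families of `m` disjoint `b`-subsets of an `n`-set number
`n.descFactorial (m * b) / (m! * (b!)^m)`, by double counting pairs (family, block):
`(m + 1) * f n (m + 1) = C(n, b) * f (n - b) m`. Altogether
`Γ * (δ-1)! * (β-1)! * ((t+β)!)^(δ-1) = C(K-t-1, β-1) * (β-1)! * (K-t-β).descFactorial (α-β)`,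
which is `(K-t-1).descFactorial (α-1)`.
-/

open Nat Finset

section DisjointFamilies

variable {ι : Type*}

open Classical in
noncomputable def disjointFamilies (u : Finset ι) (m b : ℕ) : Finset (Finset (Finset ι)) :=
  {Q ∈ (u.powersetCard b).powersetCard m | (Q : Set (Finset ι)).PairwiseDisjoint id}

theorem mem_disjointFamilies {u : Finset ι} {m b : ℕ} {Q : Finset (Finset ι)} :
    Q ∈ disjointFamilies u m b ↔
      (∀ B ∈ Q, B ⊆ u ∧ #B = b) ∧ #Q = m ∧ (Q : Set (Finset ι)).PairwiseDisjoint id := by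
  simp only [disjointFamilies, mem_filter, mem_powersetCard, Finset.subset_iff (s₁ := Q), and_assoc]

variable [DecidableEq ι]

theorem card_sup_id_of_pairwiseDisjoint {P : Finset (Finset ι)} {b : ℕ}
    (hP : (P : Set (Finset ι)).PairwiseDisjoint id) (hb : ∀ B ∈ P, #B = b) :
    #(P.sup id) = #P * b := by
  rw [sup_eq_biUnion, card_biUnion hP]
  simp only [id]
  rw [ sum_congr rfl hb, sum_const, smul_eq_mul]

theorem card_filter_mem_disjointFamilies {u B : Finset ι} {m b : ℕ} (hb : 0 < b) (hBu : B ⊆ u)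
    (hB : #B = b) :
    #{Q ∈ disjointFamilies u (m + 1) b | B ∈ Q} = #(disjointFamilies (u \ B) m b) := by
  have hBne : B.Nonempty := card_pos.mp (hB ▸ hb)
  refine card_nbij' (·.erase B) (insert B ·) ?_ ?_ ?_ ?_
  · intro Q hQ
    simp only [mem_coe, mem_filter, mem_disjointFamilies] at hQ ⊢
    obtain ⟨⟨hblocks, hcard, hdisj⟩, hBQ⟩ := hQ
    refine ⟨fun C hC => ⟨?_, (hblocks C (mem_of_mem_erase hC)).2⟩, ?_,
      hdisj.subset (by simp)⟩
    · exact subset_sdiff.mpr ⟨(hblocks C (mem_of_mem_erase hC)).1,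
        hdisj (mem_of_mem_erase hC) hBQ (ne_of_mem_erase hC)⟩
    · rw [card_erase_of_mem hBQ, hcard, Nat.add_sub_cancel]
  · intro Q hQ
    simp only [mem_coe, mem_disjointFamilies] at hQ
    obtain ⟨hblocks, hcard, hdisj⟩ := hQ
    have hdisjB : ∀ C ∈ Q, Disjoint B C := fun C hC => (subset_sdiff.mp (hblocks C hC).1).2.symm
    have hBQ : B ∉ Q := fun h => hBne.ne_empty (disjoint_self.mp (hdisjB B h))
    simp only [mem_coe, mem_filter, mem_disjointFamilies, mem_insert_self, and_true]
    refine ⟨fun C hC => ?_, by rw [card_insert_of_notMem hBQ, hcard], ?_⟩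
    · rcases mem_insert.mp hC with rfl | hC
      · exact ⟨hBu, hB⟩
      · exact ⟨(hblocks C hC).1.trans sdiff_subset, (hblocks C hC).2⟩
    · rw [coe_insert]
      exact hdisj.insert fun C hC _ => hdisjB C hC
  · intro Q hQ
    exact insert_erase (mem_filter.mp hQ).2
  · intro Q hQ
    simp only [mem_coe, mem_disjointFamilies] at hQ
    refine erase_insert fun h => hBne.ne_empty ?_
    exact disjoint_self.mp (subset_sdiff.mp (hQ.1 B h).1).2

theorem sum_card_filter_mem_disjointFamilies (u : Finset ι) (m b : ℕ) :
    ∑ B ∈ u.powersetCard b, #{Q ∈ disjointFamilies u m b | B ∈ Q} =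
      m * #(disjointFamilies u m b) := by
  have h := sum_card_bipartiteAbove_eq_sum_card_bipartiteBelow (fun B Q => B ∈ Q)
    (s := u.powersetCard b) (t := disjointFamilies u m b)
  simp only [bipartiteAbove, bipartiteBelow] at h
  rw [h, mul_comm, ← smul_eq_mul, ← sum_const]
  refine sum_congr rfl fun Q hQ => ?_
  obtain ⟨hblocks, hcard, -⟩ := mem_disjointFamilies.mp hQ
  rw [filter_mem_eq_inter, inter_eq_right.mpr fun B hB => mem_powersetCard.mpr (hblocks B hB),
    hcard]

theorem card_disjointFamilies_mul_factorial (u : Finset ι) (m : ℕ) {b : ℕ} (hb : 0 < b) :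
    #(disjointFamilies u m b) * (m ! * b ! ^ m) = (#u).descFactorial (m * b) := by
  induction m generalizing u with
  | zero =>
    have : disjointFamilies u 0 b = {∅} := by simp [disjointFamilies]
    simp [this]
  | succ m ih =>
    have hfiber : ∀ B ∈ u.powersetCard b,
        #{Q ∈ disjointFamilies u (m + 1) b | B ∈ Q} * (m ! * b ! ^ m) =
          (#u - b).descFactorial (m * b) := by
      intro B hB
      obtain ⟨hBu, hBcard⟩ := mem_powersetCard.mp hB
      rw [card_filter_mem_disjointFamilies hb hBu hBcard, ih, card_sdiff_of_subset hBu, hBcard]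
    calc #(disjointFamilies u (m + 1) b) * ((m + 1)! * b ! ^ (m + 1))
        = (m + 1) * #(disjointFamilies u (m + 1) b) * (m ! * b ! ^ m) * b ! := by
          rw [factorial_succ, pow_succ]; ring
      _ = (#u).choose b * (#u - b).descFactorial (m * b) * b ! := by
          rw [← sum_card_filter_mem_disjointFamilies, sum_mul, sum_congr rfl hfiber, sum_const,
            card_powersetCard, smul_eq_mul]
      _ = (#u - b).descFactorial ((m + 1) * b - b) * (#u).descFactorial b := by
          rw [descFactorial_eq_factorial_mul_choose _ b, Nat.add_one_mul, Nat.add_sub_cancel]; ring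
      _ = (#u).descFactorial ((m + 1) * b) :=
          descFactorial_mul_descFactorial (Nat.le_mul_of_pos_left b m.succ_pos)

theorem card_filter_exists_superset_disjointFamilies_mul_factorial {u T : Finset ι} {m b : ℕ}
    (hT : T.Nonempty) (hTu : T ⊆ u) (hTb : #T ≤ b) :
    #{P ∈ disjointFamilies u (m + 1) b | ∃ B ∈ P, T ⊆ B} * (m ! * b ! ^ m) =
      (#u - #T).choose (b - #T) * (#u - b).descFactorial (m * b) := by
  have hb : 0 < b := (card_pos.mpr hT).trans_le hTb
  set blocks := {B ∈ u.powersetCard b | T ⊆ B}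
  have hunion : {P ∈ disjointFamilies u (m + 1) b | ∃ B ∈ P, T ⊆ B} =
      blocks.biUnion fun B => {P ∈ disjointFamilies u (m + 1) b | B ∈ P} := by
    ext P
    simp only [mem_filter, mem_biUnion, blocks, mem_powersetCard]
    constructor
    · rintro ⟨hP, B, hBP, hTB⟩
      exact ⟨B, ⟨(mem_disjointFamilies.mp hP).1 B hBP, hTB⟩, hP, hBP⟩
    · rintro ⟨B, ⟨-, hTB⟩, hP, hBP⟩
      exact ⟨hP, B, hBP, hTB⟩
  have hdisj : (blocks : Set (Finset ι)).PairwiseDisjoint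
      fun B => {P ∈ disjointFamilies u (m + 1) b | B ∈ P} := by
    intro B hB B' hB' hne
    simp only [Function.onFun]
    rw [disjoint_filter]
    intro P hP hBP hB'P
    obtain ⟨x, hx⟩ := hT
    have hxB := (mem_filter.mp hB).2 hx
    have hxB' := (mem_filter.mp hB').2 hx
    exact disjoint_left.mp ((mem_disjointFamilies.mp hP).2.2 hBP hB'P hne) hxB hxB'
  have hfiber : ∀ B ∈ blocks,
      #{P ∈ disjointFamilies u (m + 1) b | B ∈ P} * (m ! * b ! ^ m) =
        (#u - b).descFactorial (m * b) := by
    intro B hB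
    obtain ⟨hBu, hBcard⟩ := mem_powersetCard.mp (mem_filter.mp hB).1
    rw [card_filter_mem_disjointFamilies hb hBu hBcard, card_disjointFamilies_mul_factorial _ _ hb,
      card_sdiff_of_subset hBu, hBcard]
  rw [hunion, card_biUnion hdisj, sum_mul, sum_congr rfl hfiber, sum_const, smul_eq_mul,
    card_filter_powersetCard_subset T u b hTu hTb]

theorem ncard_setOf_partition_eq_card_disjointFamilies (u : Finset ι) {m b : ℕ} (hb : 0 < b)
    (R : Finset (Finset ι) → Prop) [DecidablePred R] :
    {p : Finset ι × Finset (Finset ι) | p.1 ⊆ u ∧ #p.1 = m * b ∧ (∀ B ∈ p.2, #B = b) ∧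
        (∀ B ∈ p.2, ∀ B' ∈ p.2, B ≠ B' → Disjoint B B') ∧ p.2.sup id = p.1 ∧ R p.2}.ncard =
      #{P ∈ disjointFamilies u m b | R P} := by
  suffices h : {p : Finset ι × Finset (Finset ι) | p.1 ⊆ u ∧ #p.1 = m * b ∧
      (∀ B ∈ p.2, #B = b) ∧ (∀ B ∈ p.2, ∀ B' ∈ p.2, B ≠ B' → Disjoint B B') ∧
      p.2.sup id = p.1 ∧ R p.2} =
      (fun P => (P.sup id, P)) '' ↑{P ∈ disjointFamilies u m b | R P} by
    rw [h, Set.ncard_image_of_injective _ fun P Q h => (Prod.ext_iff.mp h).2, Set.ncard_coe_finset]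
  ext ⟨S, P⟩
  simp only [Set.mem_ofPred_eq, Set.mem_image, mem_coe, mem_filter, mem_disjointFamilies,
    Prod.mk.injEq]
  constructor
  · rintro ⟨hSu, hScard, hcard, hdisj, rfl, hR⟩
    refine ⟨P, ⟨⟨fun B hB => ⟨(le_sup (f := id) hB).trans hSu, hcard B hB⟩, ?_, hdisj⟩, hR⟩,
      rfl, rfl⟩
    rw [card_sup_id_of_pairwiseDisjoint hdisj hcard] at hScard
    exact Nat.eq_of_mul_eq_mul_right hb hScard
  · rintro ⟨P, ⟨⟨hblocks, hPcard, hdisj⟩, hR⟩, rfl, rfl⟩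
    exact ⟨Finset.sup_le fun B hB => (hblocks B hB).1, by
      rw [card_sup_id_of_pairwiseDisjoint hdisj fun B hB => (hblocks B hB).2, hPcard],
      fun B hB => (hblocks B hB).2, hdisj, rfl, hR⟩

end DisjointFamilies

theorem stmt_3_general (K t α β δ : ℕ) (hβ : 1 ≤ β) (hβα : β ≤ α)
    (hδ : δ * (t + β) = t + α)
    (T : Finset ℕ) (hT : T ⊆ Finset.Icc 1 K) (hTcard : T.card = t + 1) :
    {p : Finset ℕ × Finset (Finset ℕ) |
        p.1 ⊆ Finset.Icc 1 K ∧ p.1.card = t + α ∧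
        (∀ B ∈ p.2, B.card = t + β) ∧
        (∀ B ∈ p.2, ∀ B' ∈ p.2, B ≠ B' → Disjoint B B') ∧
        p.2.sup id = p.1 ∧
        (∃ B ∈ p.2, T ⊆ B)}.ncard =
      (K - t - 1).choose (α - 1) * (α - 1)! /
        ((δ - 1)! * (β - 1)! * ((t + β)!) ^ (δ - 1)) := by
  obtain ⟨m, rfl⟩ := Nat.exists_eq_add_one.mpr (Nat.pos_of_ne_zero (by rintro rfl; omega) : 0 < δ)
  have hm : m * (t + β) = (α - 1) - (β - 1) := by rw [Nat.add_one_mul] at hδ; omega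
  rw [← hδ, ncard_setOf_partition_eq_card_disjointFamilies _ (by omega)
    (fun P => ∃ B ∈ P, T ⊆ B)]
  refine (Nat.div_eq_of_eq_mul_left (by positivity) ?_).symm
  have hcount := card_filter_exists_superset_disjointFamilies_mul_factorial (m := m)
    (card_pos.mp (by omega)) hT (show #T ≤ t + β by omega)
  rw [hTcard, Nat.card_Icc, hm, show K + 1 - 1 - (t + 1) = K - t - 1 by omega,
    show t + β - (t + 1) = β - 1 by omega, show K + 1 - 1 - (t + β) = K - t - 1 - (β - 1) by omega]
    at hcount
  simp only [Nat.add_sub_cancel]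
  calc (K - t - 1).choose (α - 1) * (α - 1)!
      = (K - t - 1 - (β - 1)).descFactorial ((α - 1) - (β - 1)) *
          (K - t - 1).descFactorial (β - 1) := by
        rw [descFactorial_mul_descFactorial (by omega), descFactorial_eq_factorial_mul_choose,
          mul_comm]
    _ = #{P ∈ disjointFamilies (Icc 1 K) (m + 1) (t + β) | ∃ B ∈ P, T ⊆ B} *
          (m ! * (t + β)! ^ m) * (β - 1)! := by
        rw [hcount, descFactorial_eq_factorial_mul_choose (K - t - 1)]; ring
    _ = _ := by ring

/-- Key counting lemma: for a fixed `(t+1)`-subset `T ⊆ [K]`, the number of pairs `(S, 𝒫)`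
with `S ⊆ [K]`, `|S| = t+α`, `𝒫` a partition of `S` into `δ` blocks of cardinality `t+β`,
such that `T` is contained in some block of `𝒫`, equals
`Γ = C(K−t−1, α−1)·(α−1)! / ((δ−1)!·(β−1)!·((t+β)!)^{δ−1})`. -/
theorem stmt_3 (K t α β δ : ℕ) (hβ : 1 ≤ β) (hβα : β ≤ α) (hαK : t + α ≤ K)
    (hδ : δ * (t + β) = t + α)
    (T : Finset ℕ) (hT : T ⊆ Finset.Icc 1 K) (hTcard : T.card = t + 1) :
    {p : Finset ℕ × Finset (Finset ℕ) |
        p.1 ⊆ Finset.Icc 1 K ∧ p.1.card = t + α ∧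
        (∀ B ∈ p.2, B.card = t + β) ∧
        (∀ B ∈ p.2, ∀ B' ∈ p.2, B ≠ B' → Disjoint B B') ∧
        p.2.sup id = p.1 ∧
        (∃ B ∈ p.2, T ⊆ B)}.ncard =
      (K - t - 1).choose (α - 1) * (α - 1)! /
        ((δ - 1)! * (β - 1)! * ((t + β)!) ^ (δ - 1)) :=
  stmt_3_general K t α β δ hβ hβα hδ T hT hTcard
end

section
/- Let K, t, α, β, δ be natural numbers with 1 ≤ β ≤ α, t + α ≤ K, and δ·(t+β) = t+α, and fix a user k ∈ [K]. Then the number of triples (S, 𝒫, T), where S ⊆ [K] with |S| = t+α, 𝒫 is a partition of S into δ pairwise disjoint blocks each of cardinality t+β, and T ⊆ S with |T| = t+1, k ∈ T, and T contained in some block of 𝒫, equals C(K−1, t) · Γ, where Γ = C(K−t−1, α−1)·(α−1)!/((δ−1)!·(β−1)!·((t+β)!)^{δ−1}). (Hence over the whole delivery algorithm user k receives exactly C(K−1,t)·Γ coded mini-files, i.e., all Γ mini-files of each of its C(K−1,t) missing coded subfiles.) -/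
/-!
Choosing a triple `(S, 𝒫, T)` amounts to choosing `S ∋ k` (`C(K-1, t+α-1)` ways), a partition
of `S` into `δ` blocks of size `t+β`, and `T ∋ k` inside the block of `𝒫` containing `k`
(`C(t+β-1, t)` ways). The number `N` of partitions depends only on `|S|`: double counting
(partition, block) pairs by removing the block gives `N · δ! · ((t+β)!)^δ = (t+α)!`.
What remains is factorial bookkeeping.
-/

open Nat Finset

theorem ncard_setOf_triple {β γ ε : Type*} (A : Finset β) (B : β → Finset γ)
    (C : β → γ → Finset ε) :
    {q : β × γ × ε | q.1 ∈ A ∧ q.2.1 ∈ B q.1 ∧ q.2.2 ∈ C q.1 q.2.1}.ncard =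
      ∑ a ∈ A, ∑ b ∈ B a, #(C a b) := by
  rw [sum_sigma', ← card_sigma, ← Set.ncard_coe_finset]
  refine Set.ncard_congr (fun q _ => ⟨⟨q.1, q.2.1⟩, q.2.2⟩) ?_ ?_ ?_
  · rintro ⟨a, b, c⟩ ⟨ha, hb, hc⟩
    simp_all
  · rintro ⟨a, b, c⟩ ⟨a', b', c'⟩ - - h
    simp_all
  · rintro ⟨⟨a, b⟩, c⟩ h
    exact ⟨(a, b, c), by simp_all, rfl⟩

section UniformPartition

variable {α : Type*} [DecidableEq α]

def IsUniformPartition (b : ℕ) (Y : Finset α) (P : Finset (Finset α)) : Prop :=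
  (∀ B ∈ P, #B = b) ∧ (∀ B ∈ P, ∀ B' ∈ P, B ≠ B' → Disjoint B B') ∧ P.sup id = Y

open Classical in
noncomputable def uniformPartitions (b : ℕ) (Y : Finset α) : Finset (Finset (Finset α)) :=
  {P ∈ Y.powerset.powerset | IsUniformPartition b Y P}

namespace IsUniformPartition

variable {b : ℕ} {Y B : Finset α} {P : Finset (Finset α)}

theorem subset (hP : IsUniformPartition b Y P) (hB : B ∈ P) : B ⊆ Y :=
  hP.2.2 ▸ le_sup (f := id) hB

theorem card_eq_card_mul (hP : IsUniformPartition b Y P) : #Y = #P * b := by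
  obtain ⟨hcard, hdisj, rfl⟩ := hP
  rw [sup_eq_biUnion, card_biUnion (t := id) fun B hB B' hB' hne => hdisj B hB B' hB' hne]
  exact sum_const_nat hcard

theorem erase (hP : IsUniformPartition b Y P) (hB : B ∈ P) :
    IsUniformPartition b (Y \ B) (P.erase B) := by
  obtain ⟨hcard, hdisj, hsup⟩ := hP
  refine ⟨fun B' hB' => hcard B' (mem_of_mem_erase hB'),
    fun B₁ h₁ B₂ h₂ => hdisj B₁ (mem_of_mem_erase h₁) B₂ (mem_of_mem_erase h₂), ?_⟩
  have hdisj' : Disjoint B ((P.erase B).sup id) := Finset.disjoint_sup_right.mpr fun B' hB' =>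
    hdisj B hB B' (mem_of_mem_erase hB') (ne_of_mem_erase hB').symm
  rw [← hsup, ← insert_erase hB, sup_insert, erase_insert (notMem_erase B P)]
  exact (union_sdiff_cancel_left hdisj').symm

theorem insert (hP : IsUniformPartition b Y P) (hBY : Disjoint B Y) (hB : #B = b) :
    IsUniformPartition b (B ∪ Y) (insert B P) := by
  obtain ⟨hcard, hdisj, hsup⟩ := hP
  refine ⟨?_, ?_, by rw [sup_insert, hsup]; rfl⟩
  · simp only [mem_insert, forall_eq_or_imp]
    exact ⟨hB, hcard⟩
  · have hdisjB : ∀ B' ∈ P, Disjoint B B' := fun B' hB' =>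
      hBY.mono_right (hsup ▸ le_sup (f := id) hB')
    simp only [mem_insert, forall_eq_or_imp]
    exact ⟨⟨fun h => absurd rfl h, fun B' hB' _ => hdisjB B' hB'⟩,
      fun B' hB' => ⟨fun _ => (hdisjB B' hB').symm, hdisj B' hB'⟩⟩

theorem notMem_of_disjoint (hP : IsUniformPartition b Y P) (hB : B.Nonempty)
    (hBY : Disjoint B Y) : B ∉ P := fun hBP =>
  hB.ne_empty (disjoint_self.mp (hBY.mono_right (hP.subset hBP)))

end IsUniformPartition

theorem mem_uniformPartitions {b : ℕ} {Y : Finset α} {P : Finset (Finset α)} :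
    P ∈ uniformPartitions b Y ↔ IsUniformPartition b Y P := by
  simp only [uniformPartitions, mem_filter, mem_powerset, and_iff_right_iff_imp]
  exact fun hP B hB => mem_powerset.mpr (hP.subset hB)

theorem sum_card_uniformPartitions {b : ℕ} (hb : 0 < b) (Y : Finset α) :
    ∑ P ∈ uniformPartitions b Y, #P =
      ∑ B ∈ Y.powersetCard b, #(uniformPartitions b (Y \ B)) := by
  refine (card_sigma _ fun P => P).symm.trans (Eq.trans ?_ (card_sigma _ _))
  refine card_bij' (fun x _ => ⟨x.2, x.1.erase x.2⟩) (fun y _ => ⟨insert y.1 y.2, y.1⟩)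
    ?_ ?_ ?_ ?_
  · rintro ⟨P, B⟩ h
    simp only [mem_sigma, mem_uniformPartitions, mem_powersetCard] at h ⊢
    exact ⟨⟨h.1.subset h.2, h.1.1 B h.2⟩, h.1.erase h.2⟩
  · rintro ⟨B, Q⟩ h
    simp only [mem_sigma, mem_uniformPartitions, mem_powersetCard] at h ⊢
    have hQ := h.2.insert disjoint_sdiff h.1.2
    rw [union_sdiff_of_subset h.1.1] at hQ
    exact ⟨hQ, mem_insert_self B Q⟩
  · rintro ⟨P, B⟩ h
    simp only [mem_sigma] at h
    simp [insert_erase h.2]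
  · rintro ⟨B, Q⟩ h
    simp only [mem_sigma, mem_uniformPartitions, mem_powersetCard] at h
    have hB : B.Nonempty := card_pos.mp (h.1.2 ▸ hb)
    simp [erase_insert (h.2.notMem_of_disjoint hB disjoint_sdiff)]

theorem card_uniformPartitions_mul {b : ℕ} (hb : 0 < b) (m : ℕ) {Y : Finset α}
    (hY : #Y = m * b) : #(uniformPartitions b Y) * (m ! * b ! ^ m) = (m * b)! := by
  induction m generalizing Y with
  | zero =>
    rw [zero_mul, Finset.card_eq_zero] at hY
    suffices uniformPartitions b Y = {∅} by simp [this]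
    ext P
    simp only [mem_uniformPartitions, mem_singleton, hY]
    refine ⟨fun hP => ?_, fun h => ?_⟩
    · simpa [hb.ne'] using hP.card_eq_card_mul
    · subst h; exact ⟨by simp, by simp, rfl⟩
  | succ m ih =>
    have hparts : ∀ P ∈ uniformPartitions b Y, #P = m + 1 := fun P hP =>
      Nat.eq_of_mul_eq_mul_right hb ((mem_uniformPartitions.mp hP).card_eq_card_mul ▸ hY)
    have hrest : ∀ B ∈ Y.powersetCard b,
        #(uniformPartitions b (Y \ B)) * (m ! * b ! ^ m) = (m * b)! := fun B hB => by
      obtain ⟨hBY, hB⟩ := mem_powersetCard.mp hB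
      exact ih (by rw [card_sdiff_of_subset hBY, hY, hB, succ_mul, Nat.add_sub_cancel])
    have hsum := sum_card_uniformPartitions hb Y
    rw [sum_congr rfl hparts, sum_const, smul_eq_mul] at hsum
    calc #(uniformPartitions b Y) * ((m + 1)! * b ! ^ (m + 1))
        = (∑ B ∈ Y.powersetCard b, #(uniformPartitions b (Y \ B)) * (m ! * b ! ^ m)) * b ! := by
          rw [← sum_mul, ← hsum, factorial_succ, pow_succ]; ring
      _ = (m * b + b).choose b * (m * b)! * b ! := by
          rw [sum_congr rfl hrest, sum_const, card_powersetCard, hY, smul_eq_mul, succ_mul]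
      _ = ((m + 1) * b)! := by rw [add_choose_mul_factorial_mul_factorial, succ_mul]

theorem card_filter_mem_subset_block {b r : ℕ} {S : Finset α} {P : Finset (Finset α)} {k : α}
    (hP : IsUniformPartition b S P) (hk : k ∈ S) :
    #{T ∈ S.powersetCard (r + 1) | k ∈ T ∧ ∃ B ∈ P, T ⊆ B} = (b - 1).choose r := by
  obtain ⟨B₀, hB₀, hkB₀ : k ∈ B₀⟩ := mem_sup.mp (hP.2.2 ▸ hk : k ∈ P.sup id)
  have hblock : {T ∈ S.powersetCard (r + 1) | k ∈ T ∧ ∃ B ∈ P, T ⊆ B} =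
      {T ∈ B₀.powersetCard (r + 1) | {k} ⊆ T} := by
    ext T
    simp only [mem_filter, mem_powersetCard, singleton_subset_iff]
    constructor
    · rintro ⟨⟨-, hT⟩, hkT, B, hB, hTB⟩
      obtain rfl : B = B₀ := by
        by_contra hne
        exact disjoint_left.mp (hP.2.1 B hB B₀ hB₀ hne) (hTB hkT) hkB₀
      exact ⟨⟨hTB, hT⟩, hkT⟩
    · rintro ⟨⟨hTB₀, hT⟩, hkT⟩
      exact ⟨⟨hTB₀.trans (hP.subset hB₀), hT⟩, hkT, B₀, hB₀, hTB₀⟩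
  rw [hblock, card_filter_powersetCard_subset _ _ _ (singleton_subset_iff.mpr hkB₀)
    (by simp), card_singleton, hP.1 B₀ hB₀, Nat.add_sub_cancel]

theorem ncard_pointed_uniformPartition_triples {X : Finset α} {k : α} (hk : k ∈ X)
    {s b r N : ℕ} (hN : ∀ S : Finset α, #S = s + 1 → #(uniformPartitions b S) = N) :
    {q : Finset α × Finset (Finset α) × Finset α | q.1 ⊆ X ∧ #q.1 = s + 1 ∧
        IsUniformPartition b q.1 q.2.1 ∧ q.2.2 ⊆ q.1 ∧ #q.2.2 = r + 1 ∧ k ∈ q.2.2 ∧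
        ∃ B ∈ q.2.1, q.2.2 ⊆ B}.ncard =
      (#X - 1).choose s * N * (b - 1).choose r := by
  have hset : {q : Finset α × Finset (Finset α) × Finset α | q.1 ⊆ X ∧ #q.1 = s + 1 ∧
        IsUniformPartition b q.1 q.2.1 ∧ q.2.2 ⊆ q.1 ∧ #q.2.2 = r + 1 ∧ k ∈ q.2.2 ∧
        ∃ B ∈ q.2.1, q.2.2 ⊆ B} =
      {q | q.1 ∈ ({S ∈ X.powersetCard (s + 1) | {k} ⊆ S} : Finset _) ∧
        q.2.1 ∈ uniformPartitions b q.1 ∧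
        q.2.2 ∈ ({T ∈ q.1.powersetCard (r + 1) | k ∈ T ∧ ∃ B ∈ q.2.1, T ⊆ B} : Finset _)} := by
    ext ⟨S, P, T⟩
    simp only [Set.mem_ofPred_eq, mem_filter, mem_powersetCard, singleton_subset_iff,
      mem_uniformPartitions]
    constructor
    · rintro ⟨hSX, hS, hP, hTS, hT, hkT, hTB⟩
      exact ⟨⟨⟨hSX, hS⟩, hTS hkT⟩, hP, ⟨hTS, hT⟩, hkT, hTB⟩
    · rintro ⟨⟨⟨hSX, hS⟩, -⟩, hP, ⟨hTS, hT⟩, hkT, hTB⟩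
      exact ⟨hSX, hS, hP, hTS, hT, hkT, hTB⟩
  rw [hset, ncard_setOf_triple _ (uniformPartitions b) fun S P =>
    {T ∈ S.powersetCard (r + 1) | k ∈ T ∧ ∃ B ∈ P, T ⊆ B}]
  calc _ = ∑ S ∈ {S ∈ X.powersetCard (s + 1) | {k} ⊆ S}, N * (b - 1).choose r := by
        refine sum_congr rfl fun S hS => ?_
        simp only [mem_filter, mem_powersetCard, singleton_subset_iff] at hS
        rw [sum_congr rfl fun P hP =>
          card_filter_mem_subset_block (mem_uniformPartitions.mp hP) hS.2, sum_const,
          hN S hS.1.2, smul_eq_mul]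
    _ = (#X - 1).choose s * N * (b - 1).choose r := by
        rw [sum_const, card_filter_powersetCard_subset _ _ _ (singleton_subset_iff.mpr hk)
          (by simp), card_singleton, Nat.add_sub_cancel, smul_eq_mul, mul_assoc]

end UniformPartition

namespace Nat

theorem factorial_mul_pow_dvd_factorial {b : ℕ} (hb : 0 < b) (m : ℕ) :
    m ! * b ! ^ m ∣ (m * b)! :=
  Dvd.intro_left _ (card_uniformPartitions_mul hb m (card_range (m * b)))

theorem choose_mul_factorial_mul_factorial_add (i j : ℕ) :
    (i + j).choose i * i ! * j ! = (i + j)! := by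
  simpa using choose_mul_factorial_mul_factorial (le_add_right i j)

theorem choose_mul_mul_choose_eq {n t a c d N : ℕ}
    (hδ : (d + 1) * (t + c + 1) = t + a + 1)
    (hN : N * ((d + 1)! * (t + c + 1)! ^ (d + 1)) = (t + a + 1)!) :
    n.choose (t + a) * N * (t + c).choose t =
      n.choose t * ((n - t).choose a * a ! / (d ! * c ! * (t + c + 1)! ^ d)) := by
  set D := d ! * c ! * (t + c + 1)! ^ d
  have hN' : N * (d ! * (t + c)! * (t + c + 1)! ^ d) = (t + a)! := by
    refine Nat.eq_of_mul_eq_mul_left (by omega : 0 < t + a + 1) ?_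
    rw [← factorial_succ, ← hN, ← hδ, factorial_succ d, pow_succ, factorial_succ (t + c)]
    ring
  have hdvd : D ∣ (n - t).choose a * a ! := by
    have ha : a = d * (t + c + 1) + c := by linarith
    refine Dvd.dvd.mul_left ?_ _
    rw [ha, show D = d ! * (t + c + 1)! ^ d * (c !) by ring]
    exact (Nat.mul_dvd_mul_right (factorial_mul_pow_dvd_factorial (succ_pos _) d) _).trans
      (factorial_mul_factorial_dvd_factorial_add _ _)
  obtain ⟨q, hq⟩ := hdvd
  have hD : 0 < D := by positivity
  rw [hq, Nat.mul_div_cancel_left q hD]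
  refine Nat.eq_of_mul_eq_mul_right (Nat.mul_pos hD (factorial_pos t)) ?_
  calc n.choose (t + a) * N * (t + c).choose t * (D * t !)
      = n.choose (t + a) * (N * (d ! * ((t + c).choose t * t ! * c !) * (t + c + 1)! ^ d)) := by
        ring
    _ = n.choose (t + a) * ((t + a).choose t * t ! * a !) := by
        rw [choose_mul_factorial_mul_factorial_add t c, hN',
          choose_mul_factorial_mul_factorial_add t a]
    _ = n.choose t * ((n - t).choose a * a !) * t ! := by
        rw [← mul_assoc, ← mul_assoc, choose_mul (le_add_right t a), Nat.add_sub_cancel_left]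
        ring
    _ = n.choose t * q * (D * t !) := by rw [hq]; ring

end Nat

theorem stmt_7_general (K t α β δ : ℕ) (hβ : 1 ≤ β) (hβα : β ≤ α)
    (hδ : δ * (t + β) = t + α)
    (k : ℕ) (hk : k ∈ Finset.Icc 1 K) :
    {q : Finset ℕ × Finset (Finset ℕ) × Finset ℕ |
        q.1 ⊆ Finset.Icc 1 K ∧ q.1.card = t + α ∧
        (∀ B ∈ q.2.1, B.card = t + β) ∧
        (∀ B ∈ q.2.1, ∀ B' ∈ q.2.1, B ≠ B' → Disjoint B B') ∧
        q.2.1.sup id = q.1 ∧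
        q.2.2 ⊆ q.1 ∧ q.2.2.card = t + 1 ∧ k ∈ q.2.2 ∧
        (∃ B ∈ q.2.1, q.2.2 ⊆ B)}.ncard =
      (K - 1).choose t *
        ((K - t - 1).choose (α - 1) * (α - 1)! /
          ((δ - 1)! * (β - 1)! * ((t + β)!) ^ (δ - 1))) := by
  obtain ⟨c, rfl⟩ : ∃ c, β = c + 1 := ⟨β - 1, by omega⟩
  obtain ⟨a, rfl⟩ : ∃ a, α = a + 1 := ⟨α - 1, by omega⟩
  obtain ⟨d, rfl⟩ : ∃ d, δ = d + 1 := ⟨δ - 1, by cases δ <;> simp_all⟩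
  simp only [← add_assoc, Nat.add_sub_cancel] at hδ ⊢
  have hN : ∀ S : Finset ℕ, #S = t + a + 1 →
      #(uniformPartitions (t + c + 1) S) = (t + a + 1)! / ((d + 1)! * (t + c + 1)! ^ (d + 1)) :=
    fun S hS => Nat.eq_div_of_mul_eq_left (by positivity)
      (hδ ▸ card_uniformPartitions_mul (succ_pos _) (d + 1) (hS.trans hδ.symm))
  have hcount := ncard_pointed_uniformPartition_triples (r := t) hk hN
  simp only [IsUniformPartition, and_assoc] at hcount
  rw [hcount, Nat.card_Icc, Nat.add_sub_cancel, Nat.sub_right_comm, Nat.add_sub_cancel]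
  exact choose_mul_mul_choose_eq hδ
    (Nat.div_mul_cancel (hδ ▸ factorial_mul_pow_dvd_factorial (succ_pos _) (d + 1)))

/-- For a fixed user `k ∈ [K]`, the number of triples `(S, 𝒫, T)` — with `S ⊆ [K]`,
`|S| = t+α`, `𝒫` a partition of `S` into `δ` blocks of cardinality `t+β`, and `T ⊆ S`,
`|T| = t+1`, `k ∈ T`, `T` contained in some block of `𝒫` — equals `C(K−1, t) · Γ`, where
`Γ = C(K−t−1, α−1)·(α−1)!/((δ−1)!·(β−1)!·((t+β)!)^{δ−1})`. -/
theorem stmt_7 (K t α β δ : ℕ) (hβ : 1 ≤ β) (hβα : β ≤ α) (hαK : t + α ≤ K)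
    (hδ : δ * (t + β) = t + α)
    (k : ℕ) (hk : k ∈ Finset.Icc 1 K) :
    {q : Finset ℕ × Finset (Finset ℕ) × Finset ℕ |
        q.1 ⊆ Finset.Icc 1 K ∧ q.1.card = t + α ∧
        (∀ B ∈ q.2.1, B.card = t + β) ∧
        (∀ B ∈ q.2.1, ∀ B' ∈ q.2.1, B ≠ B' → Disjoint B B') ∧
        q.2.1.sup id = q.1 ∧
        q.2.2 ⊆ q.1 ∧ q.2.2.card = t + 1 ∧ k ∈ q.2.2 ∧
        (∃ B ∈ q.2.1, q.2.2 ⊆ B)}.ncard =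
      (K - 1).choose t *
        ((K - t - 1).choose (α - 1) * (α - 1)! /
          ((δ - 1)! * (β - 1)! * ((t + β)!) ^ (δ - 1))) :=
  stmt_7_general K t α β δ hβ hβα hδ k hk
end

section
/- Let L ≥ 1 and m ≥ 1 be natural numbers, h ∈ ℂ^L, and N₀ ≥ 0. For all w₁,…,w_m, w̄₁,…,w̄_m ∈ ℂ^L and all real γ > −1, γ̄ > −1, the following first-order (tangent-plane) global lower bound holds: (Σ_j |⟨h,w_j⟩|² + N₀)/(1+γ) ≥ (Σ_j |⟨h,w̄_j⟩|² + N₀)/(1+γ̄) + (2/(1+γ̄))·Σ_j Re( conj(⟨h,w̄_j⟩) · ⟨h, w_j − w̄_j⟩ ) − ((Σ_j |⟨h,w̄_j⟩|² + N₀)/(1+γ̄)²)·(γ − γ̄). (This bound is the linear under-estimator used in each SCA iteration; it guarantees that every point feasible for the approximated problem is feasible for the original SINR constraints and hence the monotonic convergence of the SCA objective.) -/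
/-! The quadratic-over-linear function `(x, t) ↦ (‖x‖² + c) / t` (with `c ≥ 0`) is jointly convex
on `E × (0, ∞)`, and the right-hand side of the bound is its tangent plane at `(y, s)`: the gap is
exactly `(‖s • x - t • y‖² + c (t - s)²) / (t s²) ≥ 0`. The theorem is this tangent bound for the
vectors `x = (⟨h, w_j⟩)_j` and `y = (⟨h, w̄_j⟩)_j` of `ℂ^m`, seen as a real inner product space,
with `c = N₀`, `t = 1 + γ` and `s = 1 + γ̄`. -/

theorem tangent_le_sq_norm_add_div {E : Type*} [NormedAddCommGroup E] [InnerProductSpace ℝ E]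
    {c t s : ℝ} (hc : 0 ≤ c) (ht : 0 < t) (hs : 0 < s) (x y : E) :
    (‖y‖ ^ 2 + c) / s + 2 / s * inner ℝ y (x - y) - (‖y‖ ^ 2 + c) / s ^ 2 * (t - s) ≤
      (‖x‖ ^ 2 + c) / t := by
  have hexpand : ‖s • x - t • y‖ ^ 2 =
      s ^ 2 * ‖x‖ ^ 2 - 2 * s * t * inner ℝ y x + t ^ 2 * ‖y‖ ^ 2 := by
    rw [norm_sub_sq_real, norm_smul, norm_smul, inner_smul_left, inner_smul_right,
      real_inner_comm, Real.norm_of_nonneg hs.le, Real.norm_of_nonneg ht.le, conj_trivial]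
    ring
  have hgap : (‖x‖ ^ 2 + c) / t -
      ((‖y‖ ^ 2 + c) / s + 2 / s * inner ℝ y (x - y) - (‖y‖ ^ 2 + c) / s ^ 2 * (t - s)) =
      (‖s • x - t • y‖ ^ 2 + c * (t - s) ^ 2) / (t * s ^ 2) := by
    rw [hexpand, inner_sub_right, real_inner_self_eq_norm_sq]
    field_simp
    ring
  rw [← sub_nonneg, hgap]
  positivity

theorem stmt_11_general (L m : ℕ)
    (h : EuclideanSpace ℂ (Fin L)) (N₀ : ℝ) (hN : 0 ≤ N₀)
    (w wb : Fin m → EuclideanSpace ℂ (Fin L)) (γ γb : ℝ)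
    (hγ : -1 < γ) (hγb : -1 < γb) :
    (∑ j, ‖(inner ℂ h (w j) : ℂ)‖ ^ 2 + N₀) / (1 + γ) ≥
      (∑ j, ‖(inner ℂ h (wb j) : ℂ)‖ ^ 2 + N₀) / (1 + γb)
        + (2 / (1 + γb)) *
            ∑ j, ((starRingEnd ℂ) (inner ℂ h (wb j) : ℂ) * (inner ℂ h (w j - wb j) : ℂ)).re
        - ((∑ j, ‖(inner ℂ h (wb j) : ℂ)‖ ^ 2 + N₀) / (1 + γb) ^ 2) * (γ - γb) := by
  let x : EuclideanSpace ℂ (Fin m) := WithLp.toLp 2 fun j => inner ℂ h (w j)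
  let y : EuclideanSpace ℂ (Fin m) := WithLp.toLp 2 fun j => inner ℂ h (wb j)
  have hinner : inner ℝ y (x - y) =
      ∑ j, ((starRingEnd ℂ) (inner ℂ h (wb j) : ℂ) * (inner ℂ h (w j - wb j) : ℂ)).re := by
    rw [PiLp.inner_apply]
    refine Finset.sum_congr rfl fun j _ => ?_
    rw [Complex.inner, inner_sub_right, mul_comm]
    rfl
  have htangent := tangent_le_sq_norm_add_div hN (by linarith : 0 < 1 + γ)
    (by linarith : 0 < 1 + γb) x y
  rw [hinner, EuclideanSpace.norm_sq_eq, EuclideanSpace.norm_sq_eq,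
    show (1 + γ) - (1 + γb) = γ - γb by ring] at htangent
  exact htangent

/-- First-order (tangent-plane) global lower bound used in each SCA iteration:
`(Σ_j |⟨h,w_j⟩|² + N₀)/(1+γ) ≥ (Σ_j |⟨h,w̄_j⟩|² + N₀)/(1+γ̄)
  + (2/(1+γ̄))·Σ_j Re( conj(⟨h,w̄_j⟩)·⟨h, w_j − w̄_j⟩ )
  − ((Σ_j |⟨h,w̄_j⟩|² + N₀)/(1+γ̄)²)·(γ − γ̄)`. -/
theorem stmt_11 (L m : ℕ) (hL : 1 ≤ L) (hm : 1 ≤ m)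
    (h : EuclideanSpace ℂ (Fin L)) (N₀ : ℝ) (hN : 0 ≤ N₀)
    (w wb : Fin m → EuclideanSpace ℂ (Fin L)) (γ γb : ℝ)
    (hγ : -1 < γ) (hγb : -1 < γb) :
    (∑ j, ‖(inner ℂ h (w j) : ℂ)‖ ^ 2 + N₀) / (1 + γ) ≥
      (∑ j, ‖(inner ℂ h (wb j) : ℂ)‖ ^ 2 + N₀) / (1 + γb)
        + (2 / (1 + γb)) *
            ∑ j, ((starRingEnd ℂ) (inner ℂ h (wb j) : ℂ) * (inner ℂ h (w j - wb j) : ℂ)).re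
        - ((∑ j, ‖(inner ℂ h (wb j) : ℂ)‖ ^ 2 + N₀) / (1 + γb) ^ 2) * (γ - γb) :=
  stmt_11_general L m h N₀ hN w wb γ γb hγ hγb
end
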